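/- Let K ⊆ V be a nonempty cone and 𝒻 ⊆ F̂(K) a family such that −∞ < ζ_p(co(⋃_{F ∈ 𝒻} F)) < +∞. Then ζ_p(⋃_{F ∈ 𝒻}(K ∩ F)) = ζ_p(K ∩ co(⋃_{F ∈ 𝒻} F)) = ζ_p(co(⋃_{F ∈ 𝒻} F)), and all these values are finite. -/

import Mathlib

open RealInnerProductSpace

variable {V : Type*} [NormedAddCommGroup V] [InnerProductSpace ℝ V]

/-- A (not necessarily convex or closed) cone: closed under nonnegative scaling. -/
def IsCone (C : Set V) : Prop := ∀ X ∈ C, ∀ l : ℝ, 0 ≤ l → l • X ∈ C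

/-- The optimal value `ζ_p(C) = inf {⟨Q, X⟩ : X ∈ C, ⟨H, X⟩ = 1}` in `[-∞, +∞]`;
it equals `+∞` when the feasible set is empty. -/
noncomputable def zetaP (Q H : V) (C : Set V) : EReal :=
  sInf ((fun X => ((⟪Q, X⟫ : ℝ) : EReal)) '' {X | X ∈ C ∧ ⟪H, X⟫ = 1})

lemma zetaP_antitone (Q H : V) {C D : Set V} (h : C ⊆ D) :
    zetaP Q H D ≤ zetaP Q H C := by
  apply sInf_le_sInf
  exact Set.image_mono (fun x hx => ⟨h hx.1, hx.2⟩)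

lemma isCone_convexHull {C : Set V} (hC : IsCone C) : IsCone (convexHull ℝ C) := by
  intro X hX l hl
  rw [convexHull_eq] at hX ⊢
  obtain ⟨ι, t, w, z, hw0, hw1, hz, hcm⟩ := hX
  exact ⟨ι, t, w, fun i => l • z i, hw0, hw1, fun i hi => hC _ (hz i hi) l hl, by
    rw [Finset.centerMass_eq_of_sum_1 _ _ hw1] at hcm ⊢
    simp_rw [smul_comm (w _) l, ← Finset.smul_sum, hcm]⟩

lemma add_mem_of_convex_cone {C : Set V} (hconv : Convex ℝ C) (hcone : IsCone C)
    {x y : V} (hx : x ∈ C) (hy : y ∈ C) : x + y ∈ C := by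
  have h := hconv hx hy (by norm_num : (0:ℝ) ≤ 1/2) (by norm_num : (0:ℝ) ≤ 1/2) (by norm_num)
  have := hcone _ h 2 (by norm_num)
  simpa [smul_smul, smul_add] using this

lemma arith_case1 (q b r : ℝ) (hbq : b < q) (hr0 : r < 0) :
    ∃ l : ℝ, 0 ≤ l ∧ q + l * r < b := by
  refine ⟨(q - b + 1) / (-r), div_nonneg (by linarith) (by linarith), ?_⟩
  have h : (q - b + 1) / (-r) * r = -(q - b + 1) := by
    rw [div_mul_eq_mul_div, div_eq_iff (by linarith : (-r) ≠ 0)]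
    ring
  linarith [h]

lemma arith_case2 (q b r s : ℝ) (hbq : b < q) (hspos : 0 < s) (hrs : r + q * s < 0) :
    ∃ l : ℝ, 0 ≤ l ∧ 0 < 1 - l * s ∧ (1 - l * s)⁻¹ * (q + l * r) < b := by
  have hrbs : r + b * s < 0 := by nlinarith [mul_pos (sub_pos.mpr hbq) hspos]
  have hden : 0 < -(r + b * s) := by linarith
  set l1 : ℝ := (q - b) / (-(r + b * s)) with hl1def
  have hl1pos : 0 < l1 := div_pos (by linarith) hden
  have hl1lt : l1 < 1 / s := by
    rw [hl1def, div_lt_div_iff₀ hden hspos]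
    nlinarith
  set l : ℝ := (l1 + 1 / s) / 2 with hldef
  have hlpos : 0 < l := by positivity
  have hl1l : l1 < l := by rw [hldef]; linarith
  have hls : l < 1 / s := by rw [hldef]; linarith
  have hd : 0 < 1 - l * s := by
    have := (lt_div_iff₀ hspos).mp hls
    linarith
  refine ⟨l, le_of_lt hlpos, hd, ?_⟩
  rw [inv_mul_lt_iff₀ hd]
  have hmul : l1 * (-(r + b * s)) = q - b := div_mul_cancel₀ _ (ne_of_gt hden)
  have hlval : q - b < l * (-(r + b * s)) := by
    calc q - b = l1 * (-(r + b * s)) := hmul.symm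
      _ < l * (-(r + b * s)) := mul_lt_mul_of_pos_right hl1l hden
  nlinarith [hlval]

lemma zetaP_le_convexHull (Q H : V) {C : Set V} (hC : IsCone C)
    (hbot : ⊥ < zetaP Q H (convexHull ℝ C)) :
    zetaP Q H C ≤ zetaP Q H (convexHull ℝ C) := by
  obtain ⟨c, hc1, hc2⟩ := exists_between hbot
  have hcT : c ≠ ⊤ := fun h => absurd (h ▸ hc2) (by simp)
  have hcB : c ≠ ⊥ := hc1.ne'
  set b : ℝ := c.toReal with hbdef
  have hcb : c = (b : EReal) := (EReal.coe_toReal hcT hcB).symm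
  have hb : ∀ Y ∈ convexHull ℝ C, ⟪H, Y⟫ = 1 → b < ⟪Q, Y⟫ := by
    intro Y hY hHY
    have h1 : zetaP Q H (convexHull ℝ C) ≤ ((⟪Q, Y⟫ : ℝ) : EReal) :=
      sInf_le ⟨Y, ⟨hY, hHY⟩, rfl⟩
    have := lt_of_lt_of_le hc2 h1
    rw [hcb] at this
    exact_mod_cast this
  apply le_sInf
  rintro v ⟨X, ⟨hXhull, hHX⟩, rfl⟩
  have hbq : b < ⟪Q, X⟫ := hb X hXhull hHX
  set q : ℝ := ⟪Q, X⟫ with hqdef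
  have hX := hXhull
  rw [convexHull_eq] at hX
  obtain ⟨ι, t, w, z, hw0, hw1, hz, hcm⟩ := hX
  rw [Finset.centerMass_eq_of_sum_1 _ _ hw1] at hcm
  set y : ι → V := fun i => w i • z i with hydef
  have hyC : ∀ i ∈ t, y i ∈ C := fun i hi => hC _ (hz i hi) (w i) (hw0 i hi)
  have hXsum : X = ∑ i ∈ t, y i := hcm.symm
  have hts : ∑ i ∈ t, ⟪H, y i⟫ = 1 := by rw [← inner_sum, ← hXsum, hHX]
  have hqs : ∑ i ∈ t, ⟪Q, y i⟫ = q := by rw [← inner_sum, ← hXsum]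
  have h0hull : (0 : V) ∈ convexHull ℝ C := by
    simpa using isCone_convexHull hC X hXhull 0 le_rfl
  have key : ∃ i ∈ t, 0 < ⟪H, y i⟫ ∧ ⟪Q, y i⟫ ≤ q * ⟪H, y i⟫ := by
    by_contra hcon
    push_neg at hcon
    set P := t.filter (fun i => 0 < ⟪H, y i⟫) with hPdef
    set Pc := t.filter (fun i => ¬ 0 < ⟪H, y i⟫) with hPcdef
    set s : ℝ := -∑ i ∈ Pc, ⟪H, y i⟫ with hsdef
    set r : ℝ := ∑ i ∈ Pc, ⟪Q, y i⟫ with hrdef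
    have hsplitH : ∑ i ∈ P, ⟪H, y i⟫ + ∑ i ∈ Pc, ⟪H, y i⟫ = 1 := by
      rw [Finset.sum_filter_add_sum_filter_not]; exact hts
    have hsplitQ : ∑ i ∈ P, ⟪Q, y i⟫ + ∑ i ∈ Pc, ⟪Q, y i⟫ = q := by
      rw [Finset.sum_filter_add_sum_filter_not]; exact hqs
    have hs0 : 0 ≤ s := by
      rw [hsdef, neg_nonneg]
      exact Finset.sum_nonpos (fun i hi => le_of_not_gt (Finset.mem_filter.mp hi).2)
    have hPne : P.Nonempty := by
      rcases Finset.eq_empty_or_nonempty P with h | h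
      · exfalso
        rw [h, Finset.sum_empty] at hsplitH
        have : s = -1 := by rw [hsdef]; linarith
        linarith
      · exact h
    have hstrict : q * (1 + s) < ∑ i ∈ P, ⟪Q, y i⟫ := by
      have h1 : ∑ i ∈ P, q * ⟪H, y i⟫ < ∑ i ∈ P, ⟪Q, y i⟫ := by
        apply Finset.sum_lt_sum_of_nonempty hPne
        intro i hi
        have hi' := Finset.mem_filter.mp hi
        exact hcon i hi'.1 hi'.2
      have h2 : ∑ i ∈ P, q * ⟪H, y i⟫ = q * (1 + s) := by
        rw [← Finset.mul_sum]
        congr 1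
        rw [hsdef]; linarith
      linarith
    have hrs : r + q * s < 0 := by
      have h3 : ∑ i ∈ P, ⟪Q, y i⟫ = q - r := by rw [hrdef]; linarith
      nlinarith
    set N : V := ∑ i ∈ Pc, y i with hNdef
    have hNhull : N ∈ convexHull ℝ C := by
      apply Finset.sum_induction y (· ∈ convexHull ℝ C)
      · exact fun a b ha hb =>
          add_mem_of_convex_cone (convex_convexHull ℝ C) (isCone_convexHull hC) ha hb
      · exact h0hull
      · exact fun i hi => subset_convexHull ℝ C (hyC i (Finset.mem_filter.mp hi).1)
    have hHN : ⟪H, N⟫ = -s := by rw [hNdef, inner_sum, hsdef, neg_neg]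
    have hQN : ⟪Q, N⟫ = r := by rw [hNdef, inner_sum, hrdef]
    rcases eq_or_lt_of_le hs0 with hseq | hspos
    · -- s = 0
      have hr0 : r < 0 := by rw [← hseq] at hrs; linarith
      obtain ⟨l, hl0, hlval⟩ := arith_case1 q b r hbq hr0
      have hYhull : X + l • N ∈ convexHull ℝ C :=
        add_mem_of_convex_cone (convex_convexHull ℝ C) (isCone_convexHull hC) hXhull
          (isCone_convexHull hC N hNhull l hl0)
      have hHY : ⟪H, X + l • N⟫ = 1 := by
        rw [inner_add_right, real_inner_smul_right, hHN, ← hseq, hHX]; ring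
      have hQY : ⟪Q, X + l • N⟫ = q + l * r := by
        rw [inner_add_right, real_inner_smul_right, hQN, ← hqdef]
      have hlow := hb _ hYhull hHY
      rw [hQY] at hlow
      linarith
    · -- 0 < s
      obtain ⟨l, hl0, hd, hlval⟩ := arith_case2 q b r s hbq hspos hrs
      have hYhull : (1 - l * s)⁻¹ • (X + l • N) ∈ convexHull ℝ C := by
        apply isCone_convexHull hC _ _ _ (le_of_lt (inv_pos.mpr hd))
        exact add_mem_of_convex_cone (convex_convexHull ℝ C) (isCone_convexHull hC) hXhull
          (isCone_convexHull hC N hNhull l hl0)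
      have hHY : ⟪H, (1 - l * s)⁻¹ • (X + l • N)⟫ = 1 := by
        rw [real_inner_smul_right, inner_add_right, real_inner_smul_right, hHN, hHX]
        field_simp
        ring
      have hQY : ⟪Q, (1 - l * s)⁻¹ • (X + l • N)⟫ = (1 - l * s)⁻¹ * (q + l * r) := by
        rw [real_inner_smul_right, inner_add_right, real_inner_smul_right, hQN, ← hqdef]
      have hlow := hb _ hYhull hHY
      rw [hQY] at hlow
      linarith
  obtain ⟨i, hi, htpos, hqle⟩ := key
  have hxC : (⟪H, y i⟫)⁻¹ • y i ∈ C := hC _ (hyC i hi) _ (le_of_lt (inv_pos.mpr htpos))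
  have hHx : ⟪H, (⟪H, y i⟫)⁻¹ • y i⟫ = 1 := by
    rw [real_inner_smul_right]; field_simp
  have hQx : ⟪Q, (⟪H, y i⟫)⁻¹ • y i⟫ ≤ q := by
    rw [real_inner_smul_right, inv_mul_le_iff₀ htpos]
    linarith [hqle]
  calc zetaP Q H C ≤ ((⟪Q, (⟪H, y i⟫)⁻¹ • y i⟫ : ℝ) : EReal) := sInf_le ⟨_, ⟨hxC, hHx⟩, rfl⟩
    _ ≤ ((q : ℝ) : EReal) := by exact_mod_cast hQx

/-- `F̂(K)`: the family of all convex cones `J ⊆ co K` with `co (K ∩ J) = J`. -/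
def Fhat (K : Set V) : Set (Set V) :=
  {J | Convex ℝ J ∧ IsCone J ∧ J ⊆ convexHull ℝ K ∧ convexHull ℝ (K ∩ J) = J}

/-- Theorem 3.3 (i): for a family `𝓕 ⊆ F̂(K)` with `-∞ < ζ_p(co (⋃ 𝓕)) < ∞`,
`ζ_p(⋃_{F ∈ 𝓕} (K ∩ F)) = ζ_p(K ∩ co (⋃ 𝓕)) = ζ_p(co (⋃ 𝓕))`, all finite. -/
theorem stmt_12 [FiniteDimensional ℝ V] (Q H : V) (hH : H ≠ 0) (K : Set V)
    (hKne : K.Nonempty) (hKcone : IsCone K)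
    (𝓕 : Set (Set V)) (h𝓕 : 𝓕 ⊆ Fhat K)
    (hfin : ⊥ < zetaP Q H (convexHull ℝ (⋃₀ 𝓕)) ∧ zetaP Q H (convexHull ℝ (⋃₀ 𝓕)) < ⊤) :
    zetaP Q H (⋃ F ∈ 𝓕, K ∩ F) = zetaP Q H (K ∩ convexHull ℝ (⋃₀ 𝓕)) ∧
    zetaP Q H (K ∩ convexHull ℝ (⋃₀ 𝓕)) = zetaP Q H (convexHull ℝ (⋃₀ 𝓕)) ∧
    ⊥ < zetaP Q H (⋃ F ∈ 𝓕, K ∩ F) ∧ zetaP Q H (⋃ F ∈ 𝓕, K ∩ F) < ⊤ := by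
  set S : Set V := ⋃ F ∈ 𝓕, K ∩ F with hSdef
  set D : Set V := convexHull ℝ (⋃₀ 𝓕) with hDdef
  have hSsub : S ⊆ K ∩ D := by
    intro x hx
    rw [hSdef, Set.mem_iUnion₂] at hx
    obtain ⟨F, hF, hxK, hxF⟩ := hx
    exact ⟨hxK, subset_convexHull ℝ _ ⟨F, hF, hxF⟩⟩
  have hScone : IsCone S := by
    intro x hx l hl
    rw [hSdef, Set.mem_iUnion₂] at hx ⊢
    obtain ⟨F, hF, hxK, hxF⟩ := hx
    exact ⟨F, hF, hKcone x hxK l hl, (h𝓕 hF).2.1 x hxF l hl⟩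
  have hhull : convexHull ℝ S = D := by
    apply Set.Subset.antisymm
    · exact convexHull_min (fun x hx => (hSsub hx).2) (convex_convexHull ℝ _)
    · apply convexHull_min _ (convex_convexHull ℝ S)
      rintro x ⟨F, hF, hxF⟩
      have hFeq : convexHull ℝ (K ∩ F) = F := (h𝓕 hF).2.2.2
      have : x ∈ convexHull ℝ (K ∩ F) := hFeq.symm ▸ hxF
      exact convexHull_mono (fun y hy => Set.mem_iUnion₂.mpr ⟨F, hF, hy⟩) this
  have h1 : zetaP Q H S ≤ zetaP Q H D := by
    have := zetaP_le_convexHull Q H hScone (by rw [hhull]; exact hfin.1)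
    rwa [hhull] at this
  have h2 : zetaP Q H D ≤ zetaP Q H (K ∩ D) := zetaP_antitone Q H Set.inter_subset_right
  have h3 : zetaP Q H (K ∩ D) ≤ zetaP Q H S := zetaP_antitone Q H hSsub
  have e : zetaP Q H S = zetaP Q H D := le_antisymm h1 (h2.trans h3)
  exact ⟨le_antisymm (h1.trans h2) h3, le_antisymm (h3.trans h1) h2,
    e ▸ hfin.1, e ▸ hfin.2⟩
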